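/- arXiv:1311.7090 — 9 statements merged into one kernel-verified Lean document; each statement's English description precedes it below -/
import Mathlib

section
/- Let Σ be a single-sorted algebraic signature and τ a self (k,l)-translation of Σ. Then the following are equivalent: (i) τ commutes with substitutions, i.e. τ(σ(φ̄)) = σ(τ(φ̄)) for every substitution σ and every k-formula φ̄; (ii) there exist a k-tuple x̄ = ⟨x₀,…,x_{k−1}⟩ of distinct variables and a finite set Δ(x̄) of l-formulas over Σ all of whose variables occur among x₀,…,x_{k−1}, such that for every k-formula φ̄ = ⟨φ₀,…,φ_{k−1}⟩, τ(φ̄) equals the set Δ(φ₀,…,φ_{k−1}) obtained by simultaneously substituting φᵢ for xᵢ in every formula of Δ. -/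
open FirstOrder

/-- A single-sorted algebraic signature, i.e. a first-order language
(used with no relation symbols). -/
abbrev Signature : Type 1 := FirstOrder.Language.{0,0}

/-- A `k`-formula over `L`: a `k`-tuple of terms with variables in `ℕ`. -/
abbrev KFm (L : Signature) (k : ℕ) : Type := Fin k → L.Term ℕ

/-- Application of a substitution (an endomorphism of the term algebra,
given by its action on variables) to a `k`-formula, componentwise. -/
def substK {L : Signature} {k : ℕ} (σ : ℕ → L.Term ℕ) (φ : KFm L k) : KFm L k :=
  fun i => (φ i).subst σ

/-- A `k`-dimensional deductive system over the signature `L`. -/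
structure DedSys (L : Signature) (k : ℕ) : Type 1 where
  turn : Set (KFm L k) → KFm L k → Prop
  mem_turn : ∀ (Γ : Set (KFm L k)) (γ : KFm L k), γ ∈ Γ → turn Γ γ
  cut : ∀ (Γ Δ : Set (KFm L k)) (φ : KFm L k),
    turn Γ φ → (∀ γ ∈ Γ, turn Δ γ) → turn Δ φ
  subst_invariant : ∀ (Γ : Set (KFm L k)) (φ : KFm L k) (σ : ℕ → L.Term ℕ),
    turn Γ φ → turn (substK σ '' Γ) (substK σ φ)

/-- The extension of a `(k,l)`-translation to sets of `k`-formulas. -/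
def trSet {L L' : Signature} {k l : ℕ} (τ : KFm L k → Finset (KFm L' l))
    (Γ : Set (KFm L k)) : Set (KFm L' l) :=
  ⋃ φ ∈ Γ, ↑(τ φ)

/-- `τ` interprets the `k`-deductive system `D` in the `l`-deductive system `D'`. -/
def DInterpretsIn {L L' : Signature} {k l : ℕ} (τ : KFm L k → Finset (KFm L' l))
    (D : DedSys L k) (D' : DedSys L' l) : Prop :=
  ∀ (Γ : Set (KFm L k)) (φ : KFm L k),
    D.turn Γ φ ↔ ∀ ψ ∈ τ φ, D'.turn (trSet τ Γ) ψ

/-- `τ` interprets the `k`-deductive system `D`. -/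
def DInterprets {L L' : Signature} {k l : ℕ} (τ : KFm L k → Finset (KFm L' l))
    (D : DedSys L k) : Prop :=
  ∃ D' : DedSys L' l, DInterpretsIn τ D D'

/-- `D'` refines `D` via the translation `τ`. -/
def DRefines {L L' : Signature} {k l : ℕ} (τ : KFm L k → Finset (KFm L' l))
    (D : DedSys L k) (D' : DedSys L' l) : Prop :=
  ∀ (Γ : Set (KFm L k)) (φ : KFm L k),
    D.turn Γ φ → ∀ ψ ∈ τ φ, D'.turn (trSet τ Γ) ψ

/-- The composite of two translations: `(ρ∘τ)(φ) = ⋃_{ψ ∈ τ(φ)} ρ(ψ)`. -/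
noncomputable def trComp {L L' L'' : Signature} {k l m : ℕ}
    (τ : KFm L k → Finset (KFm L' l)) (ρ : KFm L' l → Finset (KFm L'' m))
    (φ : KFm L k) : Finset (KFm L'' m) :=
  letI := Classical.decEq (KFm L'' m)
  (τ φ).biUnion ρ

/-- A `k`-structure over `L`: an algebra (with nonempty carrier in a fixed universe)
together with a filter of designated `k`-tuples. -/
structure KStr (L : Signature) (k : ℕ) : Type 1 where
  carrier : Type
  [str : L.Structure carrier]
  [nonempty : Nonempty carrier]
  filter : Set (Fin k → carrier)

attribute [instance] KStr.str KStr.nonempty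

/-- An assignment satisfies a `k`-formula in a `k`-structure when the tuple of values
belongs to the filter. -/
def KStr.holds {L : Signature} {k : ℕ} (A : KStr L k) (h : ℕ → A.carrier)
    (φ : KFm L k) : Prop :=
  (fun i => (φ i).realize h) ∈ A.filter

/-- Semantic consequence in a `k`-structure. -/
def KStr.Sat {L : Signature} {k : ℕ} (A : KStr L k) (Γ : Set (KFm L k))
    (φ : KFm L k) : Prop :=
  ∀ h : ℕ → A.carrier, (∀ ψ ∈ Γ, A.holds h ψ) → A.holds h φ

/-- A `k`-structure is a model of a `k`-deductive system. -/
def IsKModel {L : Signature} {k : ℕ} (D : DedSys L k) (A : KStr L k) : Prop :=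
  ∀ (Γ : Set (KFm L k)) (φ : KFm L k), D.turn Γ φ → A.Sat Γ φ

/-- The class of all models of a `k`-deductive system. -/
def KMod {L : Signature} {k : ℕ} (D : DedSys L k) : Set (KStr L k) :=
  {A | IsKModel D A}

/-- Semantic consequence over a class of `k`-structures. -/
def SemCons {L : Signature} {k : ℕ} (M : Set (KStr L k)) (Γ : Set (KFm L k))
    (φ : KFm L k) : Prop :=
  ∀ A ∈ M, A.Sat Γ φ

/-- An `l`-structure over `L'` is a `τ`-model of the `k`-deductive system `D`. -/
def IsTauKModel {L L' : Signature} {k l : ℕ} (τ : KFm L k → Finset (KFm L' l))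
    (D : DedSys L k) (A : KStr L' l) : Prop :=
  ∀ (Γ : Set (KFm L k)) (φ : KFm L k),
    D.turn Γ φ → ∀ ψ ∈ τ φ, A.Sat (trSet τ Γ) ψ

/-- The class of all `τ`-models of `D`. -/
def ModTauK {L L' : Signature} {k l : ℕ} (τ : KFm L k → Finset (KFm L' l))
    (D : DedSys L k) : Set (KStr L' l) :=
  {A | IsTauKModel τ D A}

/-- An algebra for the signature `L`: a structure with nonempty carrier. -/
structure Alg (L : Signature) : Type 1 where
  carrier : Type
  [str : L.Structure carrier]
  [nonempty : Nonempty carrier]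

attribute [instance] Alg.str Alg.nonempty

/-- Equational consequence determined by a class of algebras, on `2`-formulas
`⟨t, t'⟩` read as equations `t ≈ t'`. -/
def EqCons {L : Signature} (K : Set (Alg L)) (Γ : Set (KFm L 2)) (e : KFm L 2) : Prop :=
  ∀ A ∈ K, ∀ h : ℕ → A.carrier,
    (∀ γ ∈ Γ, (γ 0).realize h = (γ 1).realize h) → (e 0).realize h = (e 1).realize h

/-- `K` is a `τ`-algebraic semantics of the `k`-deductive system `D`:
`τ` interprets `D` in the equational consequence `⊨_K`. -/
def IsAlgSem {L L' : Signature} {k : ℕ} (τ : KFm L k → Finset (KFm L' 2))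
    (D : DedSys L k) (K : Set (Alg L')) : Prop :=
  ∀ (Γ : Set (KFm L k)) (φ : KFm L k),
    D.turn Γ φ ↔ ∀ e ∈ τ φ, EqCons K (trSet τ Γ) e

/-- `K^τ_L`: the class of algebras `A` such that `⟨A, Δ_A⟩` (identity filter)
is a `τ`-model of `D`. -/
def KTau {L L' : Signature} {k : ℕ} (τ : KFm L k → Finset (KFm L' 2))
    (D : DedSys L k) : Set (Alg L') :=
  {A | ∀ (Γ : Set (KFm L k)) (φ : KFm L k),
    D.turn Γ φ → ∀ e ∈ τ φ, EqCons {A} (trSet τ Γ) e}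

/-- The theories of a `k`-deductive system: sets of `k`-formulas closed under
its consequence relation. -/
def Theories {L : Signature} {k : ℕ} (D : DedSys L k) : Set (Set (KFm L k)) :=
  {T | ∀ φ : KFm L k, D.turn T φ → φ ∈ T}

/-- The set of equational consequences of `Γ` over the class of algebras `K`. -/
def CnK {L : Signature} (K : Set (Alg L)) (Γ : Set (KFm L 2)) : Set (KFm L 2) :=
  {e | EqCons K Γ e}

/-- The set of consequences of `Γ` in a deductive system. -/
def CnD {L : Signature} {k : ℕ} (D : DedSys L k) (Γ : Set (KFm L k)) : Set (KFm L k) :=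
  {φ | D.turn Γ φ}

private lemma term_subst_congr {L : FirstOrder.Language.{0,0}} {α β : Type} [DecidableEq α]
    {t : L.Term α} {σ σ' : α → L.Term β}
    (h : ∀ v ∈ t.varFinset, σ v = σ' v) : t.subst σ = t.subst σ' := by
  induction t with
  | var v => exact h v (by simp [Language.Term.varFinset])
  | func f ts ih =>
    simp only [Language.Term.subst]
    congr 1
    funext i
    exact ih i fun v hv => h v (by
      simp only [Language.Term.varFinset, Finset.mem_biUnion]
      exact ⟨i, Finset.mem_univ i, hv⟩)

private lemma term_subst_subst {L : FirstOrder.Language.{0,0}} {α β γ : Type}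
    (t : L.Term α) (σ : α → L.Term β) (σ' : β → L.Term γ) :
    (t.subst σ).subst σ' = t.subst (fun v => (σ v).subst σ') := by
  induction t with
  | var v => rfl
  | func f ts ih => simp only [Language.Term.subst]; congr 1; funext i; exact ih i

private lemma mem_varFinset_subst {L : FirstOrder.Language.{0,0}} {α β : Type} [DecidableEq α]
    [DecidableEq β] {t : L.Term α} {σ : α → L.Term β} {w : β}
    (h : w ∈ (t.subst σ).varFinset) :
    ∃ v ∈ t.varFinset, w ∈ (σ v).varFinset := by
  induction t with
  | var v => exact ⟨v, by simp [Language.Term.varFinset], h⟩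
  | func f ts ih =>
    simp only [Language.Term.subst, Language.Term.varFinset, Finset.mem_biUnion] at h
    obtain ⟨i, -, hi⟩ := h
    obtain ⟨v, hv, hw⟩ := ih i hi
    refine ⟨v, ?_, hw⟩
    simp only [Language.Term.varFinset, Finset.mem_biUnion]
    exact ⟨i, Finset.mem_univ i, hv⟩


/-- a self `(k,l)`-translation commutes with substitutions iff it is
schematic: it is given by substituting the components of a `k`-formula for a fixed
tuple of distinct variables in a fixed finite set `Δ` of `l`-formulas whose
variables all occur among those variables. -/
theorem commutes_with_substitutions_iff_schematic {L : Signature} (_hL : L.IsAlgebraic)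
    {k l : ℕ} (τ : KFm L k → Finset (KFm L l)) :
    (∀ (σ : ℕ → L.Term ℕ) (φ : KFm L k),
        (↑(τ (substK σ φ)) : Set (KFm L l)) = substK σ '' ↑(τ φ)) ↔
      ∃ x : Fin k → ℕ, Function.Injective x ∧
        ∃ Δ : Finset (KFm L l),
          (∀ ψ ∈ Δ, ∀ i : Fin l, ∀ w ∈ (ψ i).varFinset, ∃ j : Fin k, w = x j) ∧
          ∀ φ : KFm L k,
            (↑(τ φ) : Set (KFm L l)) =
              substK (fun w =>
                if h : ∃ j : Fin k, w = x j then φ h.choose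
                else FirstOrder.Language.Term.var w) '' ↑Δ := by
  constructor
  · intro h
    refine ⟨fun j => (j : ℕ), fun a b hab => Fin.ext hab, ?_⟩
    set φ₀ : KFm L k := fun j => Language.Term.var (j : ℕ) with hφ₀
    refine ⟨τ φ₀, ?_, ?_⟩
    · -- variable condition
      intro ψ hψ i w hw
      -- collapsing substitutions
      have key : ∀ c : ℕ, k ≤ c → w < k ∨ w = c := by
        intro c hc
        set σc : ℕ → L.Term ℕ := fun v =>
          if v < k then Language.Term.var v else Language.Term.var c with hσc
        have hfix : substK σc φ₀ = φ₀ := by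
          funext j
          simp only [substK, hφ₀, Language.Term.subst, hσc, j.isLt, if_pos]
        have himg : (↑(τ φ₀) : Set (KFm L l)) = substK σc '' ↑(τ φ₀) := by
          have := h σc φ₀
          rwa [hfix] at this
        have : ψ ∈ substK σc '' (↑(τ φ₀) : Set (KFm L l)) := by
          rw [← himg]; exact_mod_cast hψ
        obtain ⟨ψ', -, hψ'⟩ := this
        rw [← hψ'] at hw
        obtain ⟨v, -, hv⟩ := mem_varFinset_subst (σ := σc) hw
        by_cases hvk : v < k
        · simp only [hσc, if_pos hvk, Language.Term.varFinset, Finset.mem_singleton] at hv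
          exact Or.inl (hv ▸ hvk)
        · simp only [hσc, if_neg hvk, Language.Term.varFinset, Finset.mem_singleton] at hv
          exact Or.inr hv
      rcases key k le_rfl with hwk | hwk
      · exact ⟨⟨w, hwk⟩, rfl⟩
      · rcases key (k + 1) (Nat.le_succ k) with hwk' | hwk'
        · exact ⟨⟨w, hwk'⟩, rfl⟩
        · omega
    · -- schematic description
      intro φ
      set sφ : ℕ → L.Term ℕ := fun w =>
        if h : ∃ j : Fin k, w = (j : ℕ) then φ h.choose
        else Language.Term.var w with hsφ
      have hfix : substK sφ φ₀ = φ := by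
        funext j
        have hj : ∃ j' : Fin k, (j : ℕ) = (j' : ℕ) := ⟨j, rfl⟩
        have : hj.choose = j := Fin.ext hj.choose_spec.symm
        simp only [substK, hφ₀, Language.Term.subst, hsφ, dif_pos hj, this]
      have := h sφ φ₀
      rw [hfix] at this
      exact this
  · rintro ⟨x, hx, Δ, hΔ, hτ⟩
    intro σ φ
    rw [hτ (substK σ φ), hτ φ, ← Set.image_comp]
    apply Set.image_congr
    intro ψ hψ
    funext i
    simp only [Function.comp_apply, substK]
    rw [term_subst_subst]
    apply term_subst_congr
    intro v hv
    obtain ⟨j, rfl⟩ := hΔ ψ hψ i v hv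
    have hj : ∃ j' : Fin k, x j = x j' := ⟨j, rfl⟩
    have hch : hj.choose = j := (hx hj.choose_spec).symm
    simp only [dif_pos hj, hch, substK]
end

section
/- Let SP be a specification over Σ and σ : Σ → Σ' an injective signature morphism (injective on function symbols, with injective variable map). Let τ be the translation induced by σ, namely τ(t ≈ t') = { σ(t) ≈ σ(t') }. Then τ interprets SP; in fact τ interprets SP in the class K = { A' : A' a Σ'-algebra with A'↾σ ∈ ⟦SP⟧ }. -/
open FirstOrder

/-- An equation over a signature `L`: a pair of terms with variables in `ℕ`. -/
abbrev Eqn (L : Signature) : Type := L.Term ℕ × L.Term ℕ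

/-- A conditional equation: a finite set of premise equations and a conclusion equation. -/
abbrev CondEqn (L : Signature) : Type := Finset (Eqn L) × Eqn L

/-- An assignment satisfies an equation. -/
def Alg.SatEq {L : Signature} (A : Alg L) (h : ℕ → A.carrier) (e : Eqn L) : Prop :=
  e.1.realize h = e.2.realize h

/-- An algebra satisfies a conditional equation. -/
def Alg.Sat {L : Signature} (A : Alg L) (ξ : CondEqn L) : Prop :=
  ∀ h : ℕ → A.carrier, (∀ e ∈ ξ.1, A.SatEq h e) → A.SatEq h ξ.2

/-- A class of algebras satisfies a conditional equation. -/
def ClassSat {L : Signature} (K : Set (Alg L)) (ξ : CondEqn L) : Prop :=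
  ∀ A ∈ K, A.Sat ξ

/-- The class of algebras denoted by a flat specification with axioms `Φ`. -/
def FlatMod {L : Signature} (Φ : Set (CondEqn L)) : Set (Alg L) :=
  {A | ∀ ξ ∈ Φ, A.Sat ξ}

/-- Extension of a translation on equations to conditional equations:
`τ⟨Γ, e⟩ = { ⟨⋃_{e₀ ∈ Γ} τ(e₀), e'⟩ : e' ∈ τ(e) }`. -/
noncomputable def trCE {L L' : Signature} (τ : Eqn L → Finset (Eqn L'))
    (ξ : CondEqn L) : Finset (CondEqn L') :=
  letI := Classical.decEq (Eqn L')
  letI := Classical.decEq (CondEqn L')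
  (τ ξ.2).image (fun e' => (ξ.1.biUnion τ, e'))

/-- `τ` interprets the specification (with model class `SP`) in the class `K`. -/
def InterpretsIn {L L' : Signature} (τ : Eqn L → Finset (Eqn L'))
    (SP : Set (Alg L)) (K : Set (Alg L')) : Prop :=
  ∀ ξ : CondEqn L, ClassSat SP ξ ↔ ∀ η ∈ trCE τ ξ, ClassSat K η

/-- `τ` interprets the specification with model class `SP`. -/
def Interprets {L L' : Signature} (τ : Eqn L → Finset (Eqn L'))
    (SP : Set (Alg L)) : Prop :=
  ∃ K : Set (Alg L'), InterpretsIn τ SP K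

/-- A `τ`-model of the specification with model class `SP`. -/
def IsTauModel {L L' : Signature} (τ : Eqn L → Finset (Eqn L'))
    (SP : Set (Alg L)) (A' : Alg L') : Prop :=
  ∀ ξ : CondEqn L, ClassSat SP ξ → ∀ η ∈ trCE τ ξ, A'.Sat η

/-- The class of all `τ`-models of `SP`. -/
def ModTau {L L' : Signature} (τ : Eqn L → Finset (Eqn L'))
    (SP : Set (Alg L)) : Set (Alg L') :=
  {A' | IsTauModel τ SP A'}

/-- `SP'` refines `SP` by the interpretation `τ`. -/
def Refines {L L' : Signature} (τ : Eqn L → Finset (Eqn L'))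
    (SP : Set (Alg L)) (SP' : Set (Alg L')) : Prop :=
  ∀ ξ : CondEqn L, ClassSat SP ξ → ∀ η ∈ trCE τ ξ, ClassSat SP' η

/-- Application of a substitution to an equation. -/
def substEq {L : Signature} (σ : ℕ → L.Term ℕ) (e : Eqn L) : Eqn L :=
  (e.1.subst σ, e.2.subst σ)

/-- The extension of a signature morphism (with variable map `v`) to terms. -/
def mapTerm {L L' : Signature} (σ : L →ᴸ L') (v : ℕ → ℕ) : L.Term ℕ → L'.Term ℕ
  | .var x => .var (v x)
  | .func f ts => .func (σ.onFunction f) (fun i => mapTerm σ v (ts i))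

/-- The extension of a signature morphism to equations. -/
def mapEq {L L' : Signature} (σ : L →ᴸ L') (v : ℕ → ℕ) (e : Eqn L) : Eqn L' :=
  (mapTerm σ v e.1, mapTerm σ v e.2)

/-- The extension of a signature morphism to conditional equations. -/
noncomputable def mapCE {L L' : Signature} (σ : L →ᴸ L') (v : ℕ → ℕ)
    (ξ : CondEqn L) : CondEqn L' :=
  letI := Classical.decEq (Eqn L')
  (ξ.1.image (mapEq σ v), mapEq σ v ξ.2)

/-- The σ-reduct of an algebra along a signature morphism. -/
def Alg.reduct {L L' : Signature} (σ : L →ᴸ L') (A' : Alg L') : Alg L :=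
  { carrier := A'.carrier, str := σ.reduct A'.carrier, nonempty := A'.nonempty }

/-- The composite of two translations on equations: `(ρ∘τ)(e) = ⋃_{e' ∈ τ(e)} ρ(e')`. -/
noncomputable def trCompEq {L L' L'' : Signature} (τ : Eqn L → Finset (Eqn L'))
    (ρ : Eqn L' → Finset (Eqn L'')) (e : Eqn L) : Finset (Eqn L'') :=
  letI := Classical.decEq (Eqn L'')
  (τ e).biUnion ρ

/-! Because `σ` is injective on function symbols and `L` has no relation symbols, every
`L`-algebra is the reduct of an `L'`-algebra on the same carrier, so the reducts of
`K = {A' | A'↾σ ∈ SP}` are exactly the members of `SP`. The satisfaction condition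
`A' ⊨ σ(ξ) ↔ A'↾σ ⊨ ξ` then turns `K ⊨ σ(ξ)` into `SP ⊨ ξ`; it holds because `v` is injective,
so every assignment of the variables of `ξ` factors through `v`. -/

namespace Alg

variable {L L' : Signature}

theorem realize_mapTerm (σ : L →ᴸ L') (v : ℕ → ℕ) (A' : Alg L') (h : ℕ → A'.carrier)
    (t : L.Term ℕ) :
    (mapTerm σ v t).realize h = t.realize (M := (A'.reduct σ).carrier) (h ∘ v) := by
  induction t with
  | var x => rfl
  | func f ts ih =>
    simp only [mapTerm, Language.Term.realize, ih]
    rfl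

theorem satEq_mapEq (σ : L →ᴸ L') (v : ℕ → ℕ) (A' : Alg L') (h : ℕ → A'.carrier) (e : Eqn L) :
    A'.SatEq h (mapEq σ v e) ↔ (A'.reduct σ).SatEq (h ∘ v) e := by
  simp only [SatEq, mapEq, realize_mapTerm]
  rfl

theorem sat_mapCE_iff (σ : L →ᴸ L') {v : ℕ → ℕ} (hv : Function.Injective v) (A' : Alg L')
    (ξ : CondEqn L) : A'.Sat (mapCE σ v ξ) ↔ (A'.reduct σ).Sat ξ := by
  have sat_at : ∀ h : ℕ → A'.carrier, ((∀ e ∈ (mapCE σ v ξ).1, A'.SatEq h e) →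
      A'.SatEq h (mapCE σ v ξ).2) ↔ ((∀ e ∈ ξ.1, (A'.reduct σ).SatEq (h ∘ v) e) →
        (A'.reduct σ).SatEq (h ∘ v) ξ.2) := by
    intro h
    simp only [mapCE, Finset.forall_mem_image, satEq_mapEq]
  refine ⟨fun hA h => ?_, fun hA h => (sat_at h).2 (hA (h ∘ v))⟩
  obtain ⟨g, rfl⟩ := hv.surjective_comp_right h
  exact (sat_at g).1 (hA g)

open Classical in
noncomputable def expand (σ : L →ᴸ L') (A : Alg L) : Alg L' :=
  letI : Inhabited A.carrier := Classical.inhabited_of_nonempty'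
  { carrier := A.carrier, str := σ.defaultExpansion A.carrier }

theorem reduct_expand {σ : L →ᴸ L'} (hσ : σ.Injective) (A : Alg L) :
    (A.expand σ).reduct σ = A := by
  classical
  obtain ⟨M, str, nonempty⟩ := A
  let : Inhabited M := Classical.inhabited_of_nonempty'
  have hexp := hσ.isExpansionOn_default M
  dsimp only [reduct, expand]
  congr 1
  ext1
  · funext n f x
    exact hexp.map_onFunction f x
  · funext n r x
    exact hexp.map_onRelation r x

theorem reduct_surjective {σ : L →ᴸ L'} (hσ : σ.Injective) :
    Function.Surjective (reduct σ) :=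
  fun A => ⟨A.expand σ, reduct_expand hσ A⟩

end Alg

theorem classSat_mapCE_iff {L L' : Signature} (σ : L →ᴸ L') {v : ℕ → ℕ}
    (hv : Function.Injective v) (K : Set (Alg L')) (ξ : CondEqn L) :
    ClassSat K (mapCE σ v ξ) ↔ ClassSat (Alg.reduct σ '' K) ξ := by
  simp only [ClassSat, Set.forall_mem_image, Alg.sat_mapCE_iff σ hv]

theorem classSat_preimage_reduct_mapCE_iff {L L' : Signature} {σ : L →ᴸ L'} (hσ : σ.Injective)
    {v : ℕ → ℕ} (hv : Function.Injective v) (SP : Set (Alg L)) (ξ : CondEqn L) :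
    ClassSat (Alg.reduct σ ⁻¹' SP) (mapCE σ v ξ) ↔ ClassSat SP ξ := by
  rw [classSat_mapCE_iff σ hv, Set.image_preimage_eq SP (Alg.reduct_surjective hσ)]

theorem trCE_singleton_mapEq {L L' : Signature} (σ : L →ᴸ L') (v : ℕ → ℕ) (ξ : CondEqn L) :
    trCE (fun e => ({mapEq σ v e} : Finset (Eqn L'))) ξ = {mapCE σ v ξ} := by
  simp only [trCE, mapCE, Finset.image_singleton, Finset.biUnion_singleton]

theorem induced_translation_interprets_general {L L' : Signature}
    (_hL : L.IsAlgebraic)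
    (σ : L →ᴸ L') (v : ℕ → ℕ) (hv : Function.Injective v)
    (hinj : ∀ n, Function.Injective fun f : L.Functions n => σ.onFunction f)
    (SP : Set (Alg L)) :
    Interprets (fun e => ({mapEq σ v e} : Finset (Eqn L'))) SP ∧
      InterpretsIn (fun e => ({mapEq σ v e} : Finset (Eqn L'))) SP
        {A' : Alg L' | Alg.reduct σ A' ∈ SP} := by
  have hσ : σ.Injective := ⟨fun {n} => hinj n, fun {n} r => (_hL n).elim r⟩
  have hinterp : InterpretsIn (fun e => ({mapEq σ v e} : Finset (Eqn L'))) SP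
      {A' : Alg L' | Alg.reduct σ A' ∈ SP} := fun ξ => by
    simp only [trCE_singleton_mapEq, Finset.mem_singleton, forall_eq]
    exact (classSat_preimage_reduct_mapCE_iff hσ hv SP ξ).symm
  exact ⟨⟨_, hinterp⟩, hinterp⟩

/-- the translation induced by an injective signature morphism `σ`
interprets `SP`, namely in the class `K = { A' : A'↾σ ∈ ⟦SP⟧ }`. -/
theorem induced_translation_interprets {L L' : Signature}
    (_hL : L.IsAlgebraic) (_hL' : L'.IsAlgebraic)
    (σ : L →ᴸ L') (v : ℕ → ℕ) (hv : Function.Injective v)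
    (hinj : ∀ n, Function.Injective fun f : L.Functions n => σ.onFunction f)
    (SP : Set (Alg L)) :
    Interprets (fun e => ({mapEq σ v e} : Finset (Eqn L'))) SP ∧
      InterpretsIn (fun e => ({mapEq σ v e} : Finset (Eqn L'))) SP
        {A' : Alg L' | Alg.reduct σ A' ∈ SP} :=
  induced_translation_interprets_general _hL σ v hv hinj SP
end

section
/- Let σ : Σ → Σ' be an injective signature morphism, SP = ⟨Σ, Φ⟩ a flat specification, SP' a specification over Σ', and τ the translation induced by σ (τ(t ≈ t') = { σ(t) ≈ σ(t') }). Then SP ⇝_σ SP' if and only if SP ⇀_τ SP'. -/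
open FirstOrder

/-!
The translation induced by `σ` satisfies the satisfaction condition `A' ⊨ σ(ξ) ↔ A'↾σ ⊨ ξ`
(an assignment of `A'↾σ` factors through the injective variable map). Hence `SP ⇀_τ SP'`
says that every reduct of a model of `SP'` satisfies all consequences of `Φ`, in particular
`Φ` itself, which is `SP ⇝_σ SP'`. For the interpretation take `K`, the class of
`Σ'`-algebras whose reducts are models of `Φ`: since `σ` is injective, every model of `Φ`
expands to a member of `K` whose reduct satisfies the same conditional equations.
-/

namespace SignatureMorphism

open Language

variable {L L' : Signature} (σ : L →ᴸ L')

section Translation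

variable (v : ℕ → ℕ)

theorem mapTerm_eq_onTerm_relabel (t : L.Term ℕ) : mapTerm σ v t = σ.onTerm (t.relabel v) := by
  induction t with
  | var x => rfl
  | func f ts ih => simp only [mapTerm, ih, Term.relabel, LHom.onTerm]

theorem realize_mapTerm (A' : Alg L') (h : ℕ → A'.carrier) (t : L.Term ℕ) :
    (mapTerm σ v t).realize h = t.realize (M := (A'.reduct σ).carrier) (h ∘ v) := by
  let := σ.reduct A'.carrier
  rw [mapTerm_eq_onTerm_relabel, LHom.realize_onTerm, Term.realize_relabel]
  rfl

theorem satEq_mapEq_iff (A' : Alg L') (h : ℕ → A'.carrier) (e : Eqn L) :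
    A'.SatEq h (mapEq σ v e) ↔ (A'.reduct σ).SatEq (h ∘ v) e := by
  simp only [Alg.SatEq, mapEq, realize_mapTerm]
  exact Iff.rfl

theorem sat_mapCE_iff {v : ℕ → ℕ} (hv : Function.Injective v) (A' : Alg L') (ξ : CondEqn L) :
    A'.Sat (mapCE σ v ξ) ↔ (A'.reduct σ).Sat ξ := by
  simp only [Alg.Sat, mapCE, Finset.forall_mem_image, satEq_mapEq_iff]
  constructor
  · intro hsat h
    have hfactor : Function.extend v h h ∘ v = h := Function.extend_comp hv h h
    exact hfactor ▸ hsat (Function.extend v h h)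
  · exact fun hsat h => hsat (h ∘ v)

theorem trCE_singleton_mapEq (ξ : CondEqn L) :
    trCE (fun e => ({mapEq σ v e} : Finset (Eqn L'))) ξ = {mapCE σ v ξ} := by
  simp only [trCE, mapCE, Finset.image_singleton, Finset.biUnion_singleton]

end Translation

section Expansion

open Classical in
noncomputable def defaultExpansion (A : Alg L) : Alg L' :=
  let := Classical.inhabited_of_nonempty' (α := A.carrier)
  { carrier := A.carrier, str := σ.defaultExpansion A.carrier }

variable {σ}

open Classical in
theorem realize_reduct_defaultExpansion (hσ : σ.Injective) (A : Alg L) (h : ℕ → A.carrier)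
    (t : L.Term ℕ) :
    t.realize (M := ((defaultExpansion σ A).reduct σ).carrier) h = t.realize h := by
  let := Classical.inhabited_of_nonempty' (α := A.carrier)
  let : L'.Structure A.carrier := σ.defaultExpansion A.carrier
  have := hσ.isExpansionOn_default A.carrier
  change @Term.realize L A.carrier (σ.reduct A.carrier) _ h t = _
  calc _ = (σ.onTerm t).realize h := by
        let := σ.reduct A.carrier
        exact (LHom.realize_onTerm σ t h).symm
    _ = t.realize h := LHom.realize_onTerm σ t h

theorem sat_reduct_defaultExpansion_iff (hσ : σ.Injective) (A : Alg L) (ξ : CondEqn L) :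
    ((defaultExpansion σ A).reduct σ).Sat ξ ↔ A.Sat ξ := by
  have hsatEq (h : ℕ → A.carrier) (e : Eqn L) :
      ((defaultExpansion σ A).reduct σ).SatEq h e ↔ A.SatEq h e :=
    Iff.of_eq (congrArg₂ Eq (realize_reduct_defaultExpansion hσ A h e.1)
      (realize_reduct_defaultExpansion hσ A h e.2))
  exact forall_congr' fun h => imp_congr (forall₂_congr fun e _ => hsatEq h e) (hsatEq h ξ.2)

end Expansion

variable {σ} {v : ℕ → ℕ}

theorem interpretsIn_reduct_preimage (hσ : σ.Injective) (hv : Function.Injective v)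
    (Φ : Set (CondEqn L)) :
    InterpretsIn (fun e => ({mapEq σ v e} : Finset (Eqn L'))) (FlatMod Φ)
      {A' | A'.reduct σ ∈ FlatMod Φ} := by
  intro ξ
  simp only [trCE_singleton_mapEq, Finset.mem_singleton, forall_eq]
  refine ⟨fun hξ A' hA' => (sat_mapCE_iff σ hv A' ξ).2 (hξ _ hA'), fun hξ A hA => ?_⟩
  have hexp : (defaultExpansion σ A).reduct σ ∈ FlatMod Φ :=
    fun ζ hζ => (sat_reduct_defaultExpansion_iff hσ A ζ).2 (hA ζ hζ)
  exact (sat_reduct_defaultExpansion_iff hσ A ξ).1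
    ((sat_mapCE_iff σ hv _ ξ).1 (hξ _ hexp))

theorem refines_flatMod_iff (hv : Function.Injective v) (Φ : Set (CondEqn L))
    (SP' : Set (Alg L')) :
    Refines (fun e => ({mapEq σ v e} : Finset (Eqn L'))) (FlatMod Φ) SP' ↔
      ∀ A' ∈ SP', A'.reduct σ ∈ FlatMod Φ := by
  simp only [Refines, trCE_singleton_mapEq, Finset.mem_singleton, forall_eq, ClassSat,
    sat_mapCE_iff σ hv]
  exact ⟨fun href A' hA' ξ hξ => href ξ (fun A hA => hA ξ hξ) A' hA',
    fun hred ξ hξ A' hA' => hξ _ (hred A' hA')⟩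

end SignatureMorphism

theorem sigma_refinement_iff_refinement_by_interpretation_general {L L' : Signature}
    (_hL : L.IsAlgebraic)
    (σ : L →ᴸ L') (v : ℕ → ℕ) (hv : Function.Injective v)
    (hinj : ∀ n, Function.Injective fun f : L.Functions n => σ.onFunction f)
    (Φ : Set (CondEqn L)) (SP' : Set (Alg L')) :
    (∀ A' ∈ SP', Alg.reduct σ A' ∈ FlatMod Φ) ↔
      (Interprets (fun e => ({mapEq σ v e} : Finset (Eqn L'))) (FlatMod Φ) ∧
        Refines (fun e => ({mapEq σ v e} : Finset (Eqn L'))) (FlatMod Φ) SP') := by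
  have hσ : σ.Injective := ⟨fun {n} => hinj n, fun {n} r => (_hL n).elim r⟩
  rw [SignatureMorphism.refines_flatMod_iff hv]
  exact ⟨fun hred => ⟨⟨_, SignatureMorphism.interpretsIn_reduct_preimage hσ hv Φ⟩, hred⟩,
    And.right⟩

/-- for an injective signature morphism `σ` with induced translation `τ`
and a flat specification `SP = ⟨Σ, Φ⟩`, `SP ⇝_σ SP'` iff `SP ⇀_τ SP'`. -/
theorem sigma_refinement_iff_refinement_by_interpretation {L L' : Signature}
    (_hL : L.IsAlgebraic) (_hL' : L'.IsAlgebraic)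
    (σ : L →ᴸ L') (v : ℕ → ℕ) (hv : Function.Injective v)
    (hinj : ∀ n, Function.Injective fun f : L.Functions n => σ.onFunction f)
    (Φ : Set (CondEqn L)) (SP' : Set (Alg L')) :
    (∀ A' ∈ SP', Alg.reduct σ A' ∈ FlatMod Φ) ↔
      (Interprets (fun e => ({mapEq σ v e} : Finset (Eqn L'))) (FlatMod Φ) ∧
        Refines (fun e => ({mapEq σ v e} : Finset (Eqn L'))) (FlatMod Φ) SP') :=
  sigma_refinement_iff_refinement_by_interpretation_general _hL σ v hv hinj Φ SP'
end

section
/- Let τ be a (k,l)-translation from Σ to Σ' and L a k-deductive system over Σ. If τ interprets L, then the l-deductive system L^τ = ⊨_{Mod_τ(L)} is a τ-interpretation of L (i.e. for all Γ, φ: Γ ⊢_L φ iff τ(Γ) ⊨_{Mod_τ(L)} τ(φ)); moreover, every l-deductive system L' that is a τ-interpretation of L satisfies Mod(L') ⊆ Mod_τ(L), so L^τ is the τ-interpretation of L with the largest class of models. -/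
open FirstOrder

section Aux
open FirstOrder Language

def termAlgStr (L' : Signature) : L'.Structure (L'.Term ℕ) where
  funMap f ts := Term.func f ts
  RelMap _ _ := True

lemma termAlg_realize {L' : Signature} (h : ℕ → L'.Term ℕ) (t : L'.Term ℕ) :
    @Term.realize L' _ (termAlgStr L') _ h t = t.subst h := by
  induction t with
  | var => rfl
  | func f ts ih => simp only [Term.realize, Term.subst, termAlgStr]; exact congrArg _ (funext ih)

lemma subst_var {L' : Signature} (t : L'.Term ℕ) : t.subst Term.var = t := by
  induction t with
  | var => rfl
  | func f ts ih => simp only [Term.subst]; exact congrArg _ (funext ih)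

lemma substK_var {L' : Signature} {l : ℕ} (φ : KFm L' l) : substK Term.var φ = φ :=
  funext fun i => subst_var (φ i)

end Aux

/-- if `τ` interprets the `k`-deductive system `D`, then the
`l`-deductive system `L^τ = ⊨_{Mod_τ(L)}` is a `τ`-interpretation of `D`, and any
`l`-deductive system that is a `τ`-interpretation of `D` has its models among the
`τ`-models of `D`; so `L^τ` is the `τ`-interpretation with the largest class of models. -/
theorem modTauK_largest_interpretation {L L' : Signature}
    (_hL : L.IsAlgebraic) (_hL' : L'.IsAlgebraic)
    {k l : ℕ} (τ : KFm L k → Finset (KFm L' l)) (D : DedSys L k)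
    (h : DInterprets τ D) :
    (∀ (Γ : Set (KFm L k)) (φ : KFm L k),
        D.turn Γ φ ↔ ∀ ψ ∈ τ φ, SemCons (ModTauK τ D) (trSet τ Γ) ψ) ∧
      ∀ D' : DedSys L' l, DInterpretsIn τ D D' → KMod D' ⊆ ModTauK τ D := by
  obtain ⟨D', hD'⟩ := h
  -- key claim: SemCons over ModTauK implies D'-derivability, via the term structure
  have key : ∀ (Γ : Set (KFm L k)) (ψ : KFm L' l),
      SemCons (ModTauK τ D) (trSet τ Γ) ψ → D'.turn (trSet τ Γ) ψ := by
    intro Γ ψ hsem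
    set A : KStr L' l :=
      { carrier := L'.Term ℕ
        str := termAlgStr L'
        nonempty := ⟨Language.Term.var 0⟩
        filter := {χ | D'.turn (trSet τ Γ) χ} } with hA
    have holds_iff : ∀ (h : ℕ → L'.Term ℕ) (χ : KFm L' l),
        A.holds h χ ↔ D'.turn (trSet τ Γ) (substK h χ) := by
      intro h χ
      show (fun i => @Language.Term.realize L' _ (termAlgStr L') _ h (χ i)) ∈ A.filter ↔ _
      rw [funext fun i => termAlg_realize h (χ i)]
      exact Iff.rfl
    have hAmod : A ∈ ModTauK τ D := by
      intro Γ₀ φ₀ hturn χ hχ h hprem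
      rw [holds_iff]
      have h1 : D'.turn (trSet τ Γ₀) χ := (hD' Γ₀ φ₀).mp hturn χ hχ
      have h2 : D'.turn (substK h '' trSet τ Γ₀) (substK h χ) :=
        D'.subst_invariant _ _ _ h1
      refine D'.cut _ _ _ h2 ?_
      rintro _ ⟨γ, hγ, rfl⟩
      exact (holds_iff h γ).mp (hprem γ hγ)
    have := hsem A hAmod Language.Term.var ?_
    · rw [holds_iff] at this; rwa [substK_var] at this
    · intro χ hχ
      rw [holds_iff, substK_var]
      exact D'.mem_turn _ _ hχ
  constructor
  · intro Γ φ
    constructor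
    · intro hturn ψ hψ A hA
      exact hA Γ φ hturn ψ hψ
    · intro hsem
      exact (hD' Γ φ).mpr fun ψ hψ => key Γ ψ (hsem ψ hψ)
  · intro D'' hD'' A hA Γ φ hturn ψ hψ
    exact hA _ _ ((hD'' Γ φ).mp hturn ψ hψ)
end

section
/- Given a (k,2)-translation τ from Σ to Σ' and a k-deductive system L over Σ, if there exists a τ-algebraic semantics of L, then K^τ_L is the largest τ-algebraic semantics of L: K^τ_L is itself a τ-algebraic semantics of L, and every τ-algebraic semantics K of L satisfies K ⊆ K^τ_L. -/
open FirstOrder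

/-- if `D` has a `τ`-algebraic semantics, then `K^τ_L` is the largest
`τ`-algebraic semantics of `D`. -/
theorem kTau_largest_alg_semantics {L L' : Signature}
    (_hL : L.IsAlgebraic) (_hL' : L'.IsAlgebraic)
    {k : ℕ} (τ : KFm L k → Finset (KFm L' 2)) (D : DedSys L k)
    (h : ∃ K : Set (Alg L'), IsAlgSem τ D K) :
    IsAlgSem τ D (KTau τ D) ∧
      ∀ K : Set (Alg L'), IsAlgSem τ D K → K ⊆ KTau τ D := by
  have hsub : ∀ K : Set (Alg L'), IsAlgSem τ D K → K ⊆ KTau τ D := by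
    intro K hK A hA Γ φ hturn e he A' hA' f hf
    rcases hA' with rfl
    exact (hK Γ φ).mp hturn e he A' hA f hf
  obtain ⟨K, hK⟩ := h
  refine ⟨fun Γ φ => ⟨fun hturn e he A hA => hA Γ φ hturn e he A rfl, ?_⟩, hsub⟩
  intro hcons
  exact (hK Γ φ).mpr fun e he A hA => hcons e he A (hsub K hK hA)
end

section
/- Let L be a k-deductive system over Σ, τ a self (k,2)-translation of Σ that commutes with substitutions, and K ⊆ K^τ_L a class of Σ-algebras. Then the following are equivalent: (i) K is a τ-algebraic semantics of L; (ii) the map τ_{L,K} : Th(L) → Th(⊨_K) defined by τ_{L,K}(T) = Cn_K(τ(T)) is injective. -/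
open FirstOrder

/-- for a substitution-commuting self `(k,2)`-translation `τ` and
`K ⊆ K^τ_L`, `K` is a `τ`-algebraic semantics of `D` iff the map
`τ_{L,K} : Th(L) → Th(⊨_K)`, `T ↦ Cn_K(τ(T))`, is injective. -/
theorem alg_semantics_iff_theory_map_injective {L : Signature} (_hL : L.IsAlgebraic)
    {k : ℕ} (τ : KFm L k → Finset (KFm L 2)) (D : DedSys L k)
    (hcomm : ∀ (σ : ℕ → L.Term ℕ) (φ : KFm L k),
      (↑(τ (substK σ φ)) : Set (KFm L 2)) = substK σ '' ↑(τ φ))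
    (K : Set (Alg L)) (hK : K ⊆ KTau τ D) :
    IsAlgSem τ D K ↔
      ∀ T₁ ∈ Theories D, ∀ T₂ ∈ Theories D,
        CnK K (trSet τ T₁) = CnK K (trSet τ T₂) → T₁ = T₂ := by
  have sound : ∀ (Γ : Set (KFm L k)) (φ : KFm L k), D.turn Γ φ →
      ∀ e ∈ τ φ, EqCons K (trSet τ Γ) e := by
    intro Γ φ hΓφ e he A hA h hh
    exact hK hA Γ φ hΓφ e he A rfl h hh
  have cutE : ∀ (X Δ : Set (KFm L 2)) (e : KFm L 2),
      (∀ δ ∈ Δ, EqCons K X δ) → EqCons K Δ e → EqCons K X e := by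
    intro X Δ e hΔ hΔe A hA h hh
    exact hΔe A hA h (fun δ hδ => hΔ δ hδ A hA h hh)
  have memE : ∀ (X : Set (KFm L 2)) (e : KFm L 2), e ∈ X → EqCons K X e := by
    intro X e he A hA h hh
    exact hh e he
  have memTr : ∀ (Γ : Set (KFm L k)) (e : KFm L 2),
      e ∈ trSet τ Γ ↔ ∃ χ ∈ Γ, e ∈ τ χ := by
    intro Γ e
    simp [trSet]
  constructor
  · intro hsem T₁ hT₁ T₂ hT₂ heq
    ext φ
    constructor
    · intro hφ
      apply hT₂
      rw [hsem]
      intro e he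
      have h1 : e ∈ CnK K (trSet τ T₁) := (hsem T₁ φ).mp (D.mem_turn _ _ hφ) e he
      rw [heq] at h1
      exact h1
    · intro hφ
      apply hT₁
      rw [hsem]
      intro e he
      have h1 : e ∈ CnK K (trSet τ T₂) := (hsem T₂ φ).mp (D.mem_turn _ _ hφ) e he
      rw [heq.symm] at h1
      exact h1
  · intro hinj Γ φ
    constructor
    · exact sound Γ φ
    · intro hyp
      have hth : ∀ X : Set (KFm L k), CnD D X ∈ Theories D := by
        intro X ψ hψ
        exact D.cut _ _ _ hψ (fun γ hγ => hγ)
      have key1 : CnK K (trSet τ (CnD D Γ)) = CnK K (trSet τ Γ) := by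
        ext e
        constructor
        · intro hce
          refine cutE _ _ _ ?_ hce
          intro δ hδ
          obtain ⟨χ, hχ, hδχ⟩ := (memTr _ δ).mp hδ
          exact sound Γ χ hχ δ hδχ
        · intro hce
          refine cutE _ _ _ ?_ hce
          intro δ hδ
          obtain ⟨χ, hχ, hδχ⟩ := (memTr _ δ).mp hδ
          exact memE _ δ ((memTr _ δ).mpr ⟨χ, D.mem_turn _ _ hχ, hδχ⟩)
      have key2 : CnK K (trSet τ (CnD D (Γ ∪ {φ}))) = CnK K (trSet τ Γ) := by
        ext e
        constructor
        · intro hce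
          refine cutE _ _ _ ?_ hce
          intro δ hδ
          obtain ⟨χ, hχ, hδχ⟩ := (memTr _ δ).mp hδ
          have h1 : EqCons K (trSet τ (Γ ∪ {φ})) δ := sound _ χ hχ δ hδχ
          refine cutE _ _ _ ?_ h1
          intro ε hε
          obtain ⟨ρ, hρ, hερ⟩ := (memTr _ ε).mp hε
          rcases hρ with hρ | hρ
          · exact memE _ ε ((memTr _ ε).mpr ⟨ρ, hρ, hερ⟩)
          · rw [Set.mem_singleton_iff] at hρ
            subst hρ
            exact hyp ε hερ
        · intro hce
          refine cutE _ _ _ ?_ hce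
          intro δ hδ
          obtain ⟨χ, hχ, hδχ⟩ := (memTr _ δ).mp hδ
          exact memE _ δ ((memTr _ δ).mpr ⟨χ, D.mem_turn _ _ (Or.inl hχ), hδχ⟩)
      have hT : CnD D Γ = CnD D (Γ ∪ {φ}) :=
        hinj _ (hth Γ) _ (hth (Γ ∪ {φ})) (key1.trans key2.symm)
      have hmem : φ ∈ CnD D (Γ ∪ {φ}) := D.mem_turn _ _ (Or.inr rfl)
      rw [← hT] at hmem
      exact hmem
end

section
/- Let L be a specifiable (finitary) k-deductive system over Σ and τ a self (k,2)-translation of Σ that commutes with substitutions. If L has a τ-algebraic semantics, then every extension of L has a τ-algebraic semantics as well. -/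
open FirstOrder

section Aux

variable {L : Signature}

/-- Auxiliary: equational consequence relation on terms. -/
def ERel (K : Set (Alg L)) (Δ : Set (KFm L 2)) (t t' : L.Term ℕ) : Prop :=
  ∀ A ∈ K, ∀ h : ℕ → A.carrier,
    (∀ γ ∈ Δ, (γ 0).realize h = (γ 1).realize h) → t.realize h = t'.realize h

theorem ERel.refl (K : Set (Alg L)) (Δ : Set (KFm L 2)) (t : L.Term ℕ) :
    ERel K Δ t t := fun _ _ _ _ => rfl

theorem ERel.symm' {K : Set (Alg L)} {Δ : Set (KFm L 2)} {t t' : L.Term ℕ}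
    (h : ERel K Δ t t') : ERel K Δ t' t :=
  fun A hA g hg => (h A hA g hg).symm

theorem ERel.trans' {K : Set (Alg L)} {Δ : Set (KFm L 2)} {t t' t'' : L.Term ℕ}
    (h : ERel K Δ t t') (h' : ERel K Δ t' t'') : ERel K Δ t t'' :=
  fun A hA g hg => (h A hA g hg).trans (h' A hA g hg)

/-- The setoid on terms given by `ERel`. -/
def ESetoid (K : Set (Alg L)) (Δ : Set (KFm L 2)) : Setoid (L.Term ℕ) :=
  ⟨ERel K Δ, fun t => ERel.refl K Δ t, ERel.symm', ERel.trans'⟩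

/-- The quotient of the term algebra by `ERel`. -/
def EQuot (K : Set (Alg L)) (Δ : Set (KFm L 2)) : Type := Quotient (ESetoid K Δ)

theorem ERel.func {K : Set (Alg L)} {Δ : Set (KFm L 2)} {n : ℕ} (f : L.Functions n)
    {u w : Fin n → L.Term ℕ} (h : ∀ i, ERel K Δ (u i) (w i)) :
    ERel K Δ (Language.Term.func f u) (Language.Term.func f w) := by
  intro A hA g hg
  simp only [Language.Term.realize_func]
  exact congrArg _ (funext fun i => h i A hA g hg)

noncomputable instance EStr (K : Set (Alg L)) (Δ : Set (KFm L 2)) : L.Structure (EQuot K Δ) where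
  funMap f v := Quotient.mk (ESetoid K Δ)
    (Language.Term.func f (fun i => Quotient.out (v i)))
  RelMap _ _ := False

theorem equot_realize (K : Set (Alg L)) (Δ : Set (KFm L 2)) (σ : ℕ → L.Term ℕ)
    (t : L.Term ℕ) :
    Language.Term.realize (M := EQuot K Δ) (fun n => Quotient.mk (ESetoid K Δ) (σ n)) t
      = Quotient.mk (ESetoid K Δ) (t.subst σ) := by
  induction t with
  | var n => rfl
  | func f ts ih =>
    show Language.Structure.funMap (M := EQuot K Δ) f
        (fun i => Language.Term.realize _ (ts i)) = _
    simp only [ih]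
    refine Quotient.sound (ERel.func f fun i => ?_)
    exact Quotient.exact (Quotient.out_eq (Quotient.mk (ESetoid K Δ) ((ts i).subst σ)))

theorem subst_var_s14 (t : L.Term ℕ) : t.subst Language.Term.var = t := by
  induction t with
  | var n => rfl
  | func f ts ih => simp only [Language.Term.subst, ih]

/-- The quotient algebra. -/
noncomputable def EAlg (K : Set (Alg L)) (Δ : Set (KFm L 2)) : Alg L where
  carrier := EQuot K Δ
  nonempty := ⟨Quotient.mk (ESetoid K Δ) (Language.Term.var 0)⟩

theorem erel_of_mem {K : Set (Alg L)} {Δ : Set (KFm L 2)} {ψ : KFm L 2} (hψ : ψ ∈ Δ) :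
    ERel K Δ (ψ 0) (ψ 1) := fun A hA g hg => hg ψ hψ

end Aux

/-- if a specifiable (finitary) `k`-deductive system `D` has a
`τ`-algebraic semantics for a substitution-commuting self `(k,2)`-translation `τ`,
then so does every extension of `D`. -/
theorem extension_has_alg_semantics {L : Signature} (_hL : L.IsAlgebraic)
    {k : ℕ} (D : DedSys L k)
    (hfin : ∀ (Γ : Set (KFm L k)) (φ : KFm L k),
      D.turn Γ φ → ∃ Δ : Finset (KFm L k), ↑Δ ⊆ Γ ∧ D.turn ↑Δ φ)
    (τ : KFm L k → Finset (KFm L 2))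
    (hcomm : ∀ (σ : ℕ → L.Term ℕ) (φ : KFm L k),
      (↑(τ (substK σ φ)) : Set (KFm L 2)) = substK σ '' ↑(τ φ))
    (h : ∃ K : Set (Alg L), IsAlgSem τ D K) :
    ∀ D' : DedSys L k, (∀ (Γ : Set (KFm L k)) (φ : KFm L k), D.turn Γ φ → D'.turn Γ φ) →
      ∃ K' : Set (Alg L), IsAlgSem τ D' K' := by
  obtain ⟨K, hK⟩ := h
  intro D' hext
  refine ⟨{A | ∃ T ∈ Theories D', A = EAlg K (trSet τ T)}, ?_⟩
  intro Γ φ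
  constructor
  · -- soundness
    rintro hΓφ e he A ⟨T, hT, rfl⟩ g hprem
    set σ : ℕ → L.Term ℕ := fun n => Quotient.out (g n) with hσ
    have hg : g = fun n => Quotient.mk (ESetoid K (trSet τ T)) (σ n) :=
      funext fun n => (Quotient.out_eq (g n)).symm
    have hreal : ∀ t : L.Term ℕ, t.realize g = Quotient.mk (ESetoid K (trSet τ T)) (t.subst σ) := by
      intro t; rw [hg]; exact equot_realize K (trSet τ T) σ t
    -- premises: substK σ of every element of trSet τ Γ is in the relation
    have hprem' : ∀ ψ ∈ trSet τ Γ, ERel K (trSet τ T) ((ψ 0).subst σ) ((ψ 1).subst σ) := by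
      intro ψ hψ
      have := hprem ψ hψ
      rw [hreal, hreal] at this
      exact Quotient.exact this
    -- substK σ '' Γ ⊆ T
    have hsub : ∀ γ ∈ Γ, substK σ γ ∈ T := by
      intro γ hγ
      refine hT _ (hext _ _ ((hK T (substK σ γ)).mpr ?_))
      intro e' he'
      have : (e' : KFm L 2) ∈ substK σ '' ↑(τ γ) := by
        rw [← hcomm]; exact_mod_cast he'
      obtain ⟨ψ, hψ, rfl⟩ := this
      have hψΓ : ψ ∈ trSet τ Γ := Set.mem_biUnion hγ hψ
      exact hprem' ψ hψΓ
    -- D'.turn T (substK σ φ), hence substK σ φ ∈ T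
    have hmem : substK σ φ ∈ T := by
      refine hT _ (D'.cut (substK σ '' Γ) T (substK σ φ) (D'.subst_invariant Γ φ σ hΓφ) ?_)
      rintro γ ⟨γ', hγ', rfl⟩
      exact D'.mem_turn T _ (hsub γ' hγ')
    -- conclude
    have hse : substK σ e ∈ trSet τ T := by
      refine Set.mem_biUnion hmem ?_
      have : (substK σ e : KFm L 2) ∈ (↑(τ (substK σ φ)) : Set (KFm L 2)) := by
        rw [hcomm]; exact ⟨e, he, rfl⟩
      exact_mod_cast this
    rw [hreal, hreal]
    exact Quotient.sound (erel_of_mem hse)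
  · -- completeness
    intro hsem
    set T : Set (KFm L k) := CnD D' Γ with hTdef
    have hTth : T ∈ Theories D' := by
      intro ψ hψ
      exact D'.cut T Γ ψ hψ (fun γ hγ => hγ)
    have hΓT : Γ ⊆ T := fun γ hγ => D'.mem_turn Γ γ hγ
    have hA : EAlg K (trSet τ T) ∈ {A | ∃ T ∈ Theories D', A = EAlg K (trSet τ T)} :=
      ⟨T, hTth, rfl⟩
    set g : ℕ → (EAlg K (trSet τ T)).carrier :=
      fun n => Quotient.mk (ESetoid K (trSet τ T)) (Language.Term.var n) with hgdef
    have hreal : ∀ t : L.Term ℕ, t.realize g = Quotient.mk (ESetoid K (trSet τ T)) t := by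
      intro t
      have := equot_realize K (trSet τ T) Language.Term.var t
      rw [subst_var_s14] at this
      exact this
    have hprem : ∀ ψ ∈ trSet τ Γ, (ψ 0).realize g = (ψ 1).realize g := by
      intro ψ hψ
      obtain ⟨γ, hγ, hψγ⟩ := Set.mem_iUnion₂.mp hψ
      have hψT : ψ ∈ trSet τ T := Set.mem_biUnion (hΓT hγ) hψγ
      rw [hreal, hreal]
      exact Quotient.sound (erel_of_mem hψT)
    have hDTφ : D.turn T φ := by
      refine (hK T φ).mpr ?_
      intro e he
      have := hsem e he (EAlg K (trSet τ T)) hA g hprem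
      rw [hreal, hreal] at this
      exact Quotient.exact this
    exact D'.cut T Γ φ (hext T φ hDTφ) (fun γ hγ => hγ)
end

section
/- Let L be a k-deductive system over Σ, L' an l-deductive system over Σ', and τ a (k,l)-translation from Σ to Σ' that interprets L. Then the following are equivalent: (i) L ⇀_τ L', i.e. Γ ⊢_L φ implies τ(Γ) ⊢_{L'} τ(φ) for all Γ, φ; (ii) there exists an l-deductive system L⁰ over Σ' such that τ interprets L in L⁰ and L⁰ ⇝ L' (Γ ⊢_{L⁰} ψ implies Γ ⊢_{L'} ψ for all Γ, ψ). -/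
open FirstOrder

/-- if `τ` interprets `D`, then `D ⇀_τ D'` iff `D'` is a refinement of
some `τ`-interpretation of `D`. -/
theorem refines_iff_refinement_of_interpretation {L L' : Signature}
    (_hL : L.IsAlgebraic) (_hL' : L'.IsAlgebraic)
    {k l : ℕ} (τ : KFm L k → Finset (KFm L' l)) (D : DedSys L k) (D' : DedSys L' l)
    (hτ : DInterprets τ D) :
    DRefines τ D D' ↔
      ∃ D0 : DedSys L' l, DInterpretsIn τ D D0 ∧
        ∀ (Γ : Set (KFm L' l)) (ψ : KFm L' l), D0.turn Γ ψ → D'.turn Γ ψ := by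
  constructor
  · rintro href
    obtain ⟨D1, hD1⟩ := hτ
    refine ⟨{ turn := fun Γ ψ => D1.turn Γ ψ ∧ D'.turn Γ ψ,
              mem_turn := fun Γ γ hγ => ⟨D1.mem_turn Γ γ hγ, D'.mem_turn Γ γ hγ⟩,
              cut := fun Γ Δ φ hφ hΓ =>
                ⟨D1.cut Γ Δ φ hφ.1 fun γ hγ => (hΓ γ hγ).1,
                 D'.cut Γ Δ φ hφ.2 fun γ hγ => (hΓ γ hγ).2⟩,
              subst_invariant := fun Γ φ σ h =>
                ⟨D1.subst_invariant Γ φ σ h.1, D'.subst_invariant Γ φ σ h.2⟩ }, ?_, ?_⟩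
    · intro Γ φ
      constructor
      · intro h ψ hψ
        exact ⟨(hD1 Γ φ).mp h ψ hψ, href Γ φ h ψ hψ⟩
      · intro h
        exact (hD1 Γ φ).mpr fun ψ hψ => (h ψ hψ).1
    · intro Γ ψ h
      exact h.2
  · rintro ⟨D0, hint, hle⟩ Γ φ h ψ hψ
    exact hle _ _ ((hint Γ φ).mp h ψ hψ)
end

section
/- Let L and L' be 1-deductive systems over the same signature Σ and τ a self (1,1)-translation of Σ. Suppose L' has the conjunction property: for every finite set Γ of formulas there is a formula ξ with Γ ⊣⊢_{L'} ξ (i.e. Γ ⊢_{L'} ξ and {ξ} ⊢_{L'} γ for every γ ∈ Γ). Let f_τ : Fm_Σ → Fm_Σ be an associated function of τ, i.e. a function such that τ(φ) ⊣⊢_{L'} {f_τ(φ)} for every formula φ. Then τ is an interpretation of L in L' (for all Γ, φ: Γ ⊢_L φ iff τ(Γ) ⊢_{L'} τ(φ)) if and only if f_τ is a conservative translation (for all Γ, φ: Γ ⊢_L φ iff f_τ(Γ) ⊢_{L'} f_τ(φ), where f_τ(Γ) is the image of Γ under f_τ). -/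
open FirstOrder

/-- for 1-deductive systems where `L'` has the conjunction property,
a self `(1,1)`-translation `τ` with associated function `f` is an interpretation of
`L` in `L'` iff `f` is a conservative translation. -/
theorem interpretation_iff_conservative_translation {L : Signature} (_hL : L.IsAlgebraic)
    (D D' : DedSys L 1) (τ : KFm L 1 → Finset (KFm L 1))
    (hconj : ∀ Γ : Finset (KFm L 1),
      ∃ ξ : KFm L 1, D'.turn ↑Γ ξ ∧ ∀ γ ∈ Γ, D'.turn {ξ} γ)
    (f : KFm L 1 → KFm L 1)
    (hf : ∀ φ : KFm L 1, D'.turn ↑(τ φ) (f φ) ∧ ∀ ψ ∈ τ φ, D'.turn {f φ} ψ) :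
    (∀ (Γ : Set (KFm L 1)) (φ : KFm L 1),
        D.turn Γ φ ↔ ∀ ψ ∈ τ φ, D'.turn (trSet τ Γ) ψ) ↔
      (∀ (Γ : Set (KFm L 1)) (φ : KFm L 1),
        D.turn Γ φ ↔ D'.turn (f '' Γ) (f φ)) := by
  have key : ∀ (Γ : Set (KFm L 1)) (φ : KFm L 1),
      (∀ ψ ∈ τ φ, D'.turn (trSet τ Γ) ψ) ↔ D'.turn (f '' Γ) (f φ) := by
    intro Γ φ
    have hAB : ∀ ψ ∈ trSet τ Γ, D'.turn (f '' Γ) ψ := by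
      intro ψ hψ
      simp only [trSet, Set.mem_iUnion] at hψ
      obtain ⟨γ, hγ, hψγ⟩ := hψ
      exact D'.cut {f γ} _ ψ ((hf γ).2 ψ hψγ)
        (by rintro x rfl; exact D'.mem_turn _ _ ⟨γ, hγ, rfl⟩)
    have hBA : ∀ ψ ∈ f '' Γ, D'.turn (trSet τ Γ) ψ := by
      rintro _ ⟨γ, hγ, rfl⟩
      exact D'.cut ↑(τ γ) _ _ (hf γ).1
        (fun x hx => D'.mem_turn _ _ (by
          simp only [trSet, Set.mem_iUnion]; exact ⟨γ, hγ, hx⟩))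
    constructor
    · intro h
      have : D'.turn (trSet τ Γ) (f φ) :=
        D'.cut ↑(τ φ) _ _ (hf φ).1 h
      exact D'.cut _ _ _ this hAB
    · intro h ψ hψ
      have : D'.turn (trSet τ Γ) (f φ) := D'.cut _ _ _ h hBA
      exact D'.cut {f φ} _ ψ ((hf φ).2 ψ hψ) (by rintro x rfl; exact this)
  constructor
  · intro H Γ φ; rw [H Γ φ, key]
  · intro H Γ φ; rw [H Γ φ, key]
end
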